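/- Let x ∈ ℝ⁹ with x₁ ≥ ⋯ ≥ x₉ > 0 such that L₁(x) = [[2x₉, x₈−x₁, x₆−x₂],[x₈−x₁, 2x₇, x₅−x₃],[x₆−x₂, x₅−x₃, 2x₄]] is positive semidefinite and det L₁(x) = 0. Then (x₁−x₈)² − 4x₇x₉ + (x₁−x₈)(x₂−x₆) + 2x₉(x₃−x₅) ≥ 0. -/

import Mathlib

/-
With `a = x₁ - x₈`, `b = x₂ - x₆`, `c = x₃ - x₅`, `p = x₄`, `q = x₇`, `r = x₉`, sortedness gives
`a ≥ b ≥ c ≥ 0` and `p ≥ q > 0`, the top-left `2 × 2` minor of `L₁` gives `D := 4qr - a² ≥ 0`, and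
`det L₁ = 0` reads `p D = q b² + r c² + a b c`. Substituting this into the identity
`(2q + c)(a² + ab + 2rc - 4qr) = (a - b)(2qb + ac) + 2(p - q) D` makes the right side visibly
nonnegative.
-/

/-- The Hildebrand matrix `L₁` built from a vector `x ∈ ℝ⁹` (indices `x 0, …, x 8`
correspond to `x₁, …, x₉`). -/
def L1 (x : Fin 9 → ℝ) : Matrix (Fin 3) (Fin 3) ℝ :=
  !![2 * x 8, x 7 - x 0, x 5 - x 1;
     x 7 - x 0, 2 * x 6, x 4 - x 2;
     x 5 - x 1, x 4 - x 2, 2 * x 3]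

open scoped ComplexOrder in
theorem Matrix.PosSemidef.apply_mul_apply_le {n 𝕜 : Type*} [Fintype n] [RCLike 𝕜]
    {A : Matrix n n 𝕜} (hA : A.PosSemidef) (i j : n) :
    A i j * A j i ≤ A i i * A j j := by
  have := (hA.submatrix ![i, j]).det_nonneg
  rw [Matrix.det_fin_two] at this
  simpa [sub_nonneg] using this

theorem boundary_ineq_of_det_eq {a b c p q r : ℝ} (hcb : c ≤ b) (hba : b ≤ a) (hc : 0 ≤ c)
    (hq : 0 < q) (hqp : q ≤ p) (hminor : a ^ 2 ≤ 4 * q * r)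
    (hdet : 4 * p * q * r = p * a ^ 2 + q * b ^ 2 + r * c ^ 2 + a * b * c) :
    4 * q * r ≤ a ^ 2 + a * b + 2 * r * c := by
  have key : (2 * q + c) * (a ^ 2 + a * b + 2 * r * c - 4 * q * r) =
      (a - b) * (2 * q * b + a * c) + 2 * (p - q) * (4 * q * r - a ^ 2) := by
    linear_combination (-2) * hdet
  have hrhs : 0 ≤ (a - b) * (2 * q * b + a * c) + 2 * (p - q) * (4 * q * r - a ^ 2) := by
    have hb : 0 ≤ b := hc.trans hcb
    have ha : 0 ≤ a := hb.trans hba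
    have hab := sub_nonneg.2 hba
    have hpq := sub_nonneg.2 hqp
    have hD := sub_nonneg.2 hminor
    positivity
  rw [← key, mul_nonneg_iff_of_pos_left (by positivity)] at hrhs
  linarith

theorem L1_det (x : Fin 9 → ℝ) : (L1 x).det =
    2 * (4 * x 3 * x 6 * x 8 - x 3 * (x 0 - x 7) ^ 2 - x 6 * (x 1 - x 5) ^ 2
      - x 8 * (x 2 - x 4) ^ 2 - (x 0 - x 7) * (x 1 - x 5) * (x 2 - x 4)) := by
  rw [L1, Matrix.det_fin_three]
  simp only [Matrix.of_apply, Matrix.cons_val', Matrix.cons_val_zero, Matrix.cons_val_one,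
    Matrix.cons_val_two, Matrix.empty_val', Matrix.cons_val_fin_one, Matrix.head_cons,
    Matrix.tail_cons, Matrix.head_fin_const]
  ring

/-- If `x₁ ≥ ⋯ ≥ x₉ > 0`, `L₁(x)` is positive semidefinite and `det L₁(x) = 0`, then
`(x₁−x₈)² − 4x₇x₉ + (x₁−x₈)(x₂−x₆) + 2x₉(x₃−x₅) ≥ 0`. -/
theorem L1_boundary_ineq_det45 (x : Fin 9 → ℝ)
    (hsort : ∀ i j : Fin 9, i ≤ j → x j ≤ x i)
    (hpos : ∀ i, 0 < x i)
    (hL1 : (L1 x).PosSemidef)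
    (hdet : (L1 x).det = 0) :
    (x 0 - x 7) ^ 2 - 4 * x 6 * x 8 + (x 0 - x 7) * (x 1 - x 5) +
      2 * x 8 * (x 2 - x 4) ≥ 0 := by
  have hminor : (x 0 - x 7) ^ 2 ≤ 4 * x 6 * x 8 := by
    have := hL1.apply_mul_apply_le 0 1
    simp only [L1, Matrix.of_apply, Matrix.cons_val', Matrix.cons_val_zero, Matrix.cons_val_one,
      Matrix.empty_val', Matrix.cons_val_fin_one] at this
    linarith
  rw [L1_det] at hdet
  have h01 := hsort 0 1 (by decide)
  have h12 := hsort 1 2 (by decide)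
  have h24 := hsort 2 4 (by decide)
  have h36 := hsort 3 6 (by decide)
  have h45 := hsort 4 5 (by decide)
  have h57 := hsort 5 7 (by decide)
  have hineq := boundary_ineq_of_det_eq (a := x 0 - x 7) (b := x 1 - x 5) (c := x 2 - x 4)
    (by linarith) (by linarith) (by linarith) (hpos 6) h36 hminor (by linarith)
  linarith
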